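/- arXiv:2402.07131 — 5 statements merged into one kernel-verified Lean document; each statement's English description precedes it below -/
import Mathlib

section
/- If X₁ ~ Laplace(0, b₁) and X₂ ~ Laplace(0, b₂) are independent with b₁ ≠ b₂, then for all t ≥ 0, P(|X₁ + X₂| > t) = (b₁²/(b₁² − b₂²))·exp(−t/b₁) + (b₂²/(b₂² − b₁²))·exp(−t/b₂). -/
/-!
The characteristic function of `Laplace(0, b)` is `s ↦ 1 / (1 + b²s²)`, so by independence
`X₁ + X₂` has characteristic function `1 / ((1 + b₁²s²)(1 + b₂²s²))`, which by partial fractions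
is `(b₁² / (1 + b₁²s²) - b₂² / (1 + b₂²s²)) / (b₁² - b₂²)`. For `b₂ < b₁`, uniqueness of
characteristic functions of finite measures then gives
`(b₁² - b₂²) • law(X₁ + X₂) + b₂² • Laplace(0, b₂) = b₁² • Laplace(0, b₁)`,
and evaluating on `{x | t < |x|}`, where `Laplace(0, b)` has mass `exp (-t / b)`, gives the formula.
-/

open MeasureTheory Real

/-- The Laplace distribution with location `m` and scale `b`, as a measure on `ℝ`
given by the density `x ↦ (1/(2b)) * exp (-|x - m|/b)`. -/
noncomputable def laplaceMeasure (m b : ℝ) : Measure ℝ :=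
  MeasureTheory.volume.withDensity
    (fun x => ENNReal.ofReal ((1 / (2 * b)) * Real.exp (-|x - m| / b)))

open Set

noncomputable def laplacePDFReal (b x : ℝ) : ℝ := 1 / (2 * b) * rexp (-|x| / b)

lemma laplaceMeasure_zero_eq_withDensity (b : ℝ) :
    laplaceMeasure 0 b = volume.withDensity fun x ↦ ENNReal.ofReal (laplacePDFReal b x) := by
  simp [laplaceMeasure, laplacePDFReal]

section LaplacePDF

variable {b : ℝ}

lemma laplacePDFReal_nonneg (hb : 0 ≤ b) (x : ℝ) : 0 ≤ laplacePDFReal b x := by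
  unfold laplacePDFReal; positivity

lemma continuous_laplacePDFReal : Continuous (laplacePDFReal b) := by
  unfold laplacePDFReal; fun_prop

lemma laplacePDFReal_of_nonneg {x : ℝ} (hx : 0 ≤ x) :
    laplacePDFReal b x = 1 / (2 * b) * rexp (-b⁻¹ * x) := by
  rw [laplacePDFReal, abs_of_nonneg hx]; ring_nf

lemma laplacePDFReal_of_nonpos {x : ℝ} (hx : x ≤ 0) :
    laplacePDFReal b x = 1 / (2 * b) * rexp (b⁻¹ * x) := by
  rw [laplacePDFReal, abs_of_nonpos hx]; ring_nf

lemma integrable_laplacePDFReal (hb : 0 < b) : Integrable (laplacePDFReal b) := by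
  have hR : IntegrableOn (laplacePDFReal b) (Ioi 0) :=
    IntegrableOn.congr_fun
      ((integrableOn_exp_mul_Ioi (neg_lt_zero.2 (inv_pos.2 hb)) 0).const_mul _)
      (fun x hx ↦ (laplacePDFReal_of_nonneg (le_of_lt hx)).symm) measurableSet_Ioi
  have hL : IntegrableOn (laplacePDFReal b) (Iic 0) :=
    IntegrableOn.congr_fun ((integrableOn_exp_mul_Iic (inv_pos.2 hb) 0).const_mul _)
      (fun x hx ↦ (laplacePDFReal_of_nonpos hx).symm) measurableSet_Iic
  rw [← integrableOn_univ, ← Iic_union_Ioi (a := (0 : ℝ))]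
  exact hL.union hR

lemma integral_laplacePDFReal_Ioi (hb : 0 < b) {t : ℝ} (ht : 0 ≤ t) :
    ∫ x in Ioi t, laplacePDFReal b x = rexp (-t / b) / 2 := by
  rw [setIntegral_congr_fun measurableSet_Ioi
      (fun x hx ↦ laplacePDFReal_of_nonneg (ht.trans (le_of_lt hx))),
    integral_const_mul, integral_exp_mul_Ioi (neg_lt_zero.2 (inv_pos.2 hb))]
  field_simp

lemma integral_laplacePDFReal_Iic (hb : 0 < b) {t : ℝ} (ht : t ≤ 0) :
    ∫ x in Iic t, laplacePDFReal b x = rexp (t / b) / 2 := by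
  rw [setIntegral_congr_fun measurableSet_Iic
      (fun x hx ↦ laplacePDFReal_of_nonpos (hx.trans ht)),
    integral_const_mul, integral_exp_mul_Iic (inv_pos.2 hb)]
  field_simp

end LaplacePDF

section LaplaceMeasure

variable {b : ℝ}

lemma laplaceMeasure_zero_apply (hb : 0 < b) {s : Set ℝ} (hs : MeasurableSet s) :
    laplaceMeasure 0 b s = ENNReal.ofReal (∫ x in s, laplacePDFReal b x) := by
  rw [laplaceMeasure_zero_eq_withDensity, withDensity_apply _ hs,
    ofReal_integral_eq_lintegral_ofReal (integrable_laplacePDFReal hb).integrableOn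
      (ae_of_all _ (laplacePDFReal_nonneg hb.le))]

lemma isProbabilityMeasure_laplaceMeasure (hb : 0 < b) :
    IsProbabilityMeasure (laplaceMeasure 0 b) := by
  constructor
  rw [laplaceMeasure_zero_apply hb MeasurableSet.univ, setIntegral_univ,
    ← intervalIntegral.integral_Iic_add_Ioi (integrable_laplacePDFReal hb).integrableOn
      (integrable_laplacePDFReal hb).integrableOn,
    integral_laplacePDFReal_Iic hb le_rfl, integral_laplacePDFReal_Ioi hb le_rfl]
  norm_num

lemma laplaceMeasure_real_abs_gt (hb : 0 < b) {t : ℝ} (ht : 0 ≤ t) :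
    (laplaceMeasure 0 b).real {x | t < |x|} = rexp (-t / b) := by
  have hset : {x : ℝ | t < |x|} = Iio (-t) ∪ Ioi t := by
    ext x
    simp only [mem_ofPred_eq, mem_union, mem_Iio, mem_Ioi, lt_abs, lt_neg, or_comm]
  have hf := integrable_laplacePDFReal hb
  rw [measureReal_def, hset,
    laplaceMeasure_zero_apply hb (measurableSet_Iio.union measurableSet_Ioi),
    ENNReal.toReal_ofReal (setIntegral_nonneg_of_ae (ae_of_all _ (laplacePDFReal_nonneg hb.le))),
    setIntegral_union ((Iic_disjoint_Ioi (by linarith)).mono_left Iio_subset_Iic_self)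
      measurableSet_Ioi hf.integrableOn hf.integrableOn,
    ← integral_Iic_eq_integral_Iio, integral_laplacePDFReal_Iic hb (by linarith),
    integral_laplacePDFReal_Ioi hb ht]
  ring_nf

lemma laplacePDFReal_smul_cexp_of_nonneg {x : ℝ} (hx : 0 ≤ x) (s : ℝ) :
    laplacePDFReal b x • Complex.exp (s * x * Complex.I)
      = (1 / (2 * b) : ℂ) * Complex.exp ((-b⁻¹ + s * Complex.I) * x) := by
  rw [laplacePDFReal_of_nonneg hx, Complex.real_smul]
  push_cast
  rw [mul_assoc, ← Complex.exp_add]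
  ring_nf

lemma laplacePDFReal_smul_cexp_of_nonpos {x : ℝ} (hx : x ≤ 0) (s : ℝ) :
    laplacePDFReal b x • Complex.exp (s * x * Complex.I)
      = (1 / (2 * b) : ℂ) * Complex.exp ((b⁻¹ + s * Complex.I) * x) := by
  rw [laplacePDFReal_of_nonpos hx, Complex.real_smul]
  push_cast
  rw [mul_assoc, ← Complex.exp_add]
  ring_nf

lemma charFun_laplaceMeasure (hb : 0 < b) (s : ℝ) :
    charFun (laplaceMeasure 0 b) s = ((1 + b ^ 2 * s ^ 2 : ℝ) : ℂ)⁻¹ := by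
  have hR : 0 < (b⁻¹ + s * Complex.I).re := by simpa using hb
  have hL : (-b⁻¹ + s * Complex.I).re < 0 := by simpa using hb
  have hEqR : EqOn (fun x ↦ laplacePDFReal b x • Complex.exp (s * x * Complex.I))
      (fun x : ℝ ↦ (1 / (2 * b) : ℂ) * Complex.exp ((-b⁻¹ + s * Complex.I) * x)) (Ioi 0) :=
    fun x hx ↦ laplacePDFReal_smul_cexp_of_nonneg (le_of_lt hx) s
  have hEqL : EqOn (fun x ↦ laplacePDFReal b x • Complex.exp (s * x * Complex.I))
      (fun x : ℝ ↦ (1 / (2 * b) : ℂ) * Complex.exp ((b⁻¹ + s * Complex.I) * x)) (Iic 0) :=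
    fun x hx ↦ laplacePDFReal_smul_cexp_of_nonpos hx s
  rw [charFun_apply_real, laplaceMeasure_zero_eq_withDensity,
    integral_withDensity_eq_integral_toReal_smul
      continuous_laplacePDFReal.measurable.ennreal_ofReal
      (ae_of_all _ fun _ ↦ ENNReal.ofReal_lt_top)]
  simp_rw [ENNReal.toReal_ofReal (laplacePDFReal_nonneg hb.le _)]
  rw [← intervalIntegral.integral_Iic_add_Ioi
      (IntegrableOn.congr_fun ((integrableOn_exp_mul_complex_Iic hR 0).const_mul _) hEqL.symm
        measurableSet_Iic)
      (IntegrableOn.congr_fun ((integrableOn_exp_mul_complex_Ioi hL 0).const_mul _) hEqR.symm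
        measurableSet_Ioi),
    setIntegral_congr_fun measurableSet_Iic hEqL, setIntegral_congr_fun measurableSet_Ioi hEqR,
    integral_const_mul, integral_const_mul, integral_exp_mul_complex_Iic hR,
    integral_exp_mul_complex_Ioi hL]
  simp only [Complex.ofReal_zero, mul_zero, Complex.exp_zero]
  have hb0 : (b : ℂ) ≠ 0 := mod_cast hb.ne'
  have hR0 : 1 + b * s * Complex.I ≠ 0 := fun h ↦ by simpa using congrArg Complex.re h
  have hL0 : -1 + b * s * Complex.I ≠ 0 := fun h ↦ by simpa using congrArg Complex.re h
  have h1 : ((1 + b ^ 2 * s ^ 2 : ℝ) : ℂ) ≠ 0 := mod_cast (by positivity)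
  push_cast at h1 ⊢
  field_simp
  linear_combination (-2 * b ^ 2 * s ^ 2) * Complex.I_sq

end LaplaceMeasure

section CharFun

variable {E : Type*} [NormedAddCommGroup E] [InnerProductSpace ℝ E] {mE : MeasurableSpace E}
  {μ ν : Measure E}

lemma charFun_add_measure [OpensMeasurableSpace E] [IsFiniteMeasure μ] [IsFiniteMeasure ν]
    (t : E) :
    charFun (μ + ν) t = charFun μ t + charFun ν t := by
  have hint (ρ : Measure E) [IsFiniteMeasure ρ] :
      Integrable (fun x ↦ Complex.exp (inner ℝ x t * Complex.I)) ρ :=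
    (integrable_const (1 : ℝ)).mono (by fun_prop) (by simp)
  simp_rw [charFun_apply]
  exact integral_add_measure (hint μ) (hint ν)

lemma charFun_smul_measure (c : NNReal) (t : E) :
    charFun (c • μ) t = c * charFun μ t := by
  simp_rw [charFun_apply, integral_smul_nnreal_measure, NNReal.smul_def, Complex.real_smul]

end CharFun

lemma smul_add_smul_laplaceMeasure_of_charFun_eq_mul {b₁ b₂ : ℝ} (hb₂ : 0 < b₂)
    (hb₂₁ : b₂ < b₁) (ν : Measure ℝ) [IsFiniteMeasure ν]
    (hν : charFun ν = charFun (laplaceMeasure 0 b₁) * charFun (laplaceMeasure 0 b₂)) :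
    (b₁ ^ 2 - b₂ ^ 2).toNNReal • ν + (b₂ ^ 2).toNNReal • laplaceMeasure 0 b₂
      = (b₁ ^ 2).toNNReal • laplaceMeasure 0 b₁ := by
  have hb₁ : 0 < b₁ := hb₂.trans hb₂₁
  have := isProbabilityMeasure_laplaceMeasure hb₁
  have := isProbabilityMeasure_laplaceMeasure hb₂
  refine Measure.ext_of_charFun (funext fun s ↦ ?_)
  rw [charFun_add_measure, charFun_smul_measure, charFun_smul_measure, charFun_smul_measure, hν,
    Pi.mul_apply, charFun_laplaceMeasure hb₁, charFun_laplaceMeasure hb₂,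
    Real.coe_toNNReal _ (by nlinarith), Real.coe_toNNReal _ (by positivity),
    Real.coe_toNNReal _ (by positivity)]
  have h₁ : ((1 + b₁ ^ 2 * s ^ 2 : ℝ) : ℂ) ≠ 0 := mod_cast (by positivity)
  have h₂ : ((1 + b₂ ^ 2 * s ^ 2 : ℝ) : ℂ) ≠ 0 := mod_cast (by positivity)
  push_cast at h₁ h₂ ⊢
  field_simp
  ring

lemma measureReal_abs_gt_of_charFun_eq_mul {b₁ b₂ : ℝ} (hb₁ : 0 < b₁) (hb₂ : 0 < b₂)
    (hne : b₁ ≠ b₂) (ν : Measure ℝ) [IsFiniteMeasure ν]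
    (hν : charFun ν = charFun (laplaceMeasure 0 b₁) * charFun (laplaceMeasure 0 b₂))
    {t : ℝ} (ht : 0 ≤ t) :
    ν.real {x | t < |x|} = b₁ ^ 2 / (b₁ ^ 2 - b₂ ^ 2) * rexp (-t / b₁)
      + b₂ ^ 2 / (b₂ ^ 2 - b₁ ^ 2) * rexp (-t / b₂) := by
  wlog hb₂₁ : b₂ < b₁ generalizing b₁ b₂
  · rw [add_comm]
    exact this hb₂ hb₁ hne.symm (by rw [hν, mul_comm]) (lt_of_le_of_ne (not_lt.1 hb₂₁) hne)
  have := isProbabilityMeasure_laplaceMeasure hb₁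
  have := isProbabilityMeasure_laplaceMeasure hb₂
  have key := congrArg (fun ρ ↦ ρ.real {x : ℝ | t < |x|})
    (smul_add_smul_laplaceMeasure_of_charFun_eq_mul hb₂ hb₂₁ ν hν)
  rw [measureReal_add_apply, measureReal_nnreal_smul_apply, measureReal_nnreal_smul_apply,
    measureReal_nnreal_smul_apply, laplaceMeasure_real_abs_gt hb₁ ht,
    laplaceMeasure_real_abs_gt hb₂ ht, Real.coe_toNNReal _ (by nlinarith),
    Real.coe_toNNReal _ (sq_nonneg b₁), Real.coe_toNNReal _ (sq_nonneg b₂)] at key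
  have hd : b₁ ^ 2 - b₂ ^ 2 ≠ 0 := by nlinarith
  rw [show b₂ ^ 2 - b₁ ^ 2 = -(b₁ ^ 2 - b₂ ^ 2) by ring, div_neg, neg_mul,
    ← sub_eq_add_neg, div_mul_eq_mul_div, div_mul_eq_mul_div, ← sub_div, eq_div_iff hd]
  linarith

/-- If `X₁ ~ Laplace(0, b₁)` and `X₂ ~ Laplace(0, b₂)` are independent with `b₁ ≠ b₂`,
then for all `t ≥ 0`,
`P(|X₁ + X₂| > t) = b₁²/(b₁² − b₂²) · exp(−t/b₁) + b₂²/(b₂² − b₁²) · exp(−t/b₂)`. -/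
theorem laplace_sum_tail {Ω : Type*} [MeasurableSpace Ω] (μ : Measure Ω)
    [IsProbabilityMeasure μ] (X₁ X₂ : Ω → ℝ) (b₁ b₂ : ℝ)
    (hb₁ : 0 < b₁) (hb₂ : 0 < b₂) (hne : b₁ ≠ b₂)
    (hm₁ : Measurable X₁) (hm₂ : Measurable X₂)
    (h₁ : Measure.map X₁ μ = laplaceMeasure 0 b₁)
    (h₂ : Measure.map X₂ μ = laplaceMeasure 0 b₂)
    (hind : ProbabilityTheory.IndepFun X₁ X₂ μ) :
    ∀ t : ℝ, 0 ≤ t →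
      μ {ω | t < |X₁ ω + X₂ ω|} =
        ENNReal.ofReal
          (b₁ ^ 2 / (b₁ ^ 2 - b₂ ^ 2) * Real.exp (-t / b₁)
            + b₂ ^ 2 / (b₂ ^ 2 - b₁ ^ 2) * Real.exp (-t / b₂)) := by
  intro t ht
  have hS : Measurable fun ω ↦ X₁ ω + X₂ ω := hm₁.add hm₂
  have := Measure.isProbabilityMeasure_map (μ := μ) hS.aemeasurable
  have hν := hind.charFun_map_fun_add_eq_mul hm₁.aemeasurable hm₂.aemeasurable
  rw [h₁, h₂] at hν
  rw [← measureReal_abs_gt_of_charFun_eq_mul hb₁ hb₂ hne _ hν ht, ofReal_measureReal,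
    Measure.map_apply hS (measurableSet_lt measurable_const measurable_abs)]
  rfl
end

section
/- Let Y₁,…,Y_k be independent real random variables such that P(|Y_i − μ| ≤ c) ≥ 1/2 + η for all i, where η > 0 and c ∈ ℝ. Then for any α ≥ 0, the probability that |Y_{(i)} − μ| ≤ c for all order-statistic indices i with (1 − 2α)k/2 ≤ i ≤ (1 + 2α)k/2 is at least 1 − exp(−2k·max(η − α, 0)²). -/
open MeasureTheory Real

/-! If fewer than `(1 - 2α)k/2` of the `Yᵢ` fall outside `[m - c, m + c]`, then every order
statistic with index in the window lies inside it: too few values lie below `m - c` (resp. above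
`m + c`) to reach index `i` from below (resp. above). The number of outliers is a sum of `k`
independent indicators of mean at most `1/2 - η`, so by Hoeffding's inequality it reaches
`(1 - 2α)k/2 = k(1/2 - η) + k(η - α)` with probability at most `exp(-2k(η - α)²)`. -/

/-- The `i`-th order statistic of a tuple `y : Fin k → ℝ` (zero-indexed:
`orderStat y i` is the `(i+1)`-th smallest value). -/
noncomputable def orderStat {k : ℕ} (y : Fin k → ℝ) (i : Fin k) : ℝ :=
  y (Tuple.sort y i)

open Finset ProbabilityTheory

theorem add_one_le_card_filter_lt_of_orderStat_lt {k : ℕ} {y : Fin k → ℝ} {i : Fin k}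
    {a : ℝ} (h : orderStat y i < a) : (i : ℕ) + 1 ≤ #{j | y j < a} := by
  rw [← Fin.card_Iic]
  refine card_le_card_of_injOn (Tuple.sort y) (fun j hj => ?_) (Tuple.sort y).injective.injOn
  simp only [coe_filter, mem_univ, true_and, Set.mem_ofPred_eq]
  exact (Tuple.monotone_sort y (mem_Iic.mp hj)).trans_lt h

theorem le_add_card_filter_gt_of_lt_orderStat {k : ℕ} {y : Fin k → ℝ} {i : Fin k} {a : ℝ}
    (h : a < orderStat y i) : k ≤ i + #{j | a < y j} := by
  have hcard : k - i ≤ #{j | a < y j} := by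
    rw [← Fin.card_Ici]
    refine card_le_card_of_injOn (Tuple.sort y) (fun j hj => ?_) (Tuple.sort y).injective.injOn
    simp only [coe_filter, mem_univ, true_and, Set.mem_ofPred_eq]
    exact h.trans_le (Tuple.monotone_sort y (mem_Ici.mp hj))
  omega

theorem abs_orderStat_sub_le {k : ℕ} {y : Fin k → ℝ} {i : Fin k} {m c : ℝ}
    (hlow : #{j | c < |y j - m|} < i + 1) (hhigh : i + #{j | c < |y j - m|} < k) :
    |orderStat y i - m| ≤ c := by
  have hlt : #{j | y j < m - c} ≤ #{j | c < |y j - m|} :=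
    card_le_card (monotone_filter_right _ fun j _ hj => lt_abs.mpr (.inr (by linarith)))
  have hgt : #{j | m + c < y j} ≤ #{j | c < |y j - m|} :=
    card_le_card (monotone_filter_right _ fun j _ hj => lt_abs.mpr (.inl (by linarith)))
  rw [abs_le]
  constructor
  · by_contra! h
    have := add_one_le_card_filter_lt_of_orderStat_lt (show orderStat y i < m - c by linarith)
    omega
  · by_contra! h
    have := le_add_card_filter_gt_of_lt_orderStat (show m + c < orderStat y i by linarith)
    omega

theorem abs_orderStat_sub_le_of_mem_window {k : ℕ} {y : Fin k → ℝ} {i : Fin k} {m c α : ℝ}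
    (hbad : (#{j | c < |y j - m|} : ℝ) < (1 - 2 * α) * k / 2)
    (hlow : (1 - 2 * α) * k / 2 ≤ (i : ℝ) + 1) (hhigh : (i : ℝ) + 1 ≤ (1 + 2 * α) * k / 2) :
    |orderStat y i - m| ≤ c :=
  abs_orderStat_sub_le (by exact_mod_cast (by linarith : (#{j | c < |y j - m|} : ℝ) < i + 1))
    (by exact_mod_cast (by linarith : (i + #{j | c < |y j - m|} : ℝ) < k))

theorem measureReal_le_card_filter_mem_le {Ω β ι : Type*} [MeasurableSpace Ω]
    [MeasurableSpace β] {μ : Measure Ω} [IsProbabilityMeasure μ] [Fintype ι] {X : ι → Ω → β}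
    (hX : ∀ i, Measurable (X i)) (hindep : iIndepFun X μ) {S : Set β} [DecidablePred (· ∈ S)]
    (hS : MeasurableSet S) {p t : ℝ} (hp : ∀ i, μ.real (X i ⁻¹' S) ≤ p) (ht : 0 ≤ t) :
    μ.real {ω | Fintype.card ι * (p + t) ≤ #{i | X i ω ∈ S}} ≤
      exp (-2 * Fintype.card ι * t ^ 2) := by
  set Z : ι → Ω → ℝ := fun i => S.indicator 1 ∘ X i
  have hZ_mem (i : ι) (ω : Ω) : Z i ω ∈ Set.Icc 0 1 := by
    by_cases h : X i ω ∈ S <;> simp [Z, h]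
  have hZ_mean (i : ι) : μ[Z i] = μ.real (X i ⁻¹' S) := by
    have : Z i = (X i ⁻¹' S).indicator 1 := by
      ext ω
      by_cases h : X i ω ∈ S <;> simp [Z, h]
    rw [this]
    exact integral_indicator_one (hX i hS)
  have hsubG (i : ι) : HasSubgaussianMGF (fun ω => Z i ω - μ[Z i]) (1 / 4) μ := by
    have hZ_meas : Measurable (Z i) := (measurable_one.indicator hS).comp (hX i)
    convert hasSubgaussianMGF_of_mem_Icc (μ := μ) hZ_meas.aemeasurable
      (ae_of_all _ (hZ_mem i)) using 1
    norm_num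
  have hindep' : iIndepFun (fun i ω => Z i ω - μ[Z i]) μ := by
    exact hindep.comp (fun i x => S.indicator (1 : β → ℝ) x - μ[Z i])
      fun i => (measurable_one.indicator hS).sub_const _
  have hsum (ω : Ω) : ∑ i, Z i ω = #{i | X i ω ∈ S} := by
    simp [Z, Set.indicator_apply, sum_boole]
  calc μ.real {ω | Fintype.card ι * (p + t) ≤ #{i | X i ω ∈ S}}
      ≤ μ.real {ω | Fintype.card ι * t ≤ ∑ i, (Z i ω - μ[Z i])} := by
        refine measureReal_mono (fun ω hω => ?_)
        have : ∑ i, μ[Z i] ≤ Fintype.card ι * p := by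
          simpa [hZ_mean] using sum_le_sum fun i (_ : i ∈ univ) => hp i
        simp only [Set.mem_ofPred_eq, sum_sub_distrib, hsum] at hω ⊢
        linarith
    _ ≤ exp (-(Fintype.card ι * t) ^ 2 / (2 * ∑ _i : ι, (1 / 4 : NNReal))) :=
        HasSubgaussianMGF.measure_sum_ge_le_of_iIndepFun hindep' (fun i _ => hsubG i)
          (by positivity)
    _ = exp (-2 * Fintype.card ι * t ^ 2) := by
        rcases eq_or_ne (Fintype.card ι) 0 with hn | hn
        · simp [hn]
        · rw [sum_const, card_univ, nsmul_eq_mul]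
          push_cast
          field_simp
          ring_nf

theorem ofReal_one_sub_le_prob_compl {Ω : Type*} [MeasurableSpace Ω] {μ : Measure Ω}
    [IsProbabilityMeasure μ] {s : Set Ω} {e : ℝ} (h : μ.real s ≤ e) :
    ENNReal.ofReal (1 - e) ≤ μ sᶜ := by
  have he : 0 ≤ e := measureReal_nonneg.trans h
  have hs : μ s ≤ ENNReal.ofReal e :=
    (ENNReal.le_ofReal_iff_toReal_le (measure_ne_top μ s) he).mpr h
  rw [ENNReal.ofReal_sub _ he, ENNReal.ofReal_one, tsub_le_iff_left, ← measure_univ (μ := μ)]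
  exact (measure_univ_le_add_compl s).trans (add_le_add_left hs _)

theorem probReal_compl_le_one_sub {Ω : Type*} [MeasurableSpace Ω] {μ : Measure Ω}
    [IsProbabilityMeasure μ] {s : Set Ω} (hs : MeasurableSet s) {q : ℝ}
    (h : ENNReal.ofReal q ≤ μ s) : μ.real sᶜ ≤ 1 - q := by
  rw [probReal_compl_eq_one_sub hs]
  exact sub_le_sub_left ((ENNReal.ofReal_le_iff_le_toReal (measure_ne_top μ s)).mp h) 1

theorem orderStat_concentration_general {Ω : Type*} [MeasurableSpace Ω] (μ : Measure Ω)
    [IsProbabilityMeasure μ] {k : ℕ} (Y : Fin k → Ω → ℝ)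
    (hmeas : ∀ i, Measurable (Y i))
    (hindep : ProbabilityTheory.iIndepFun Y μ)
    (m c η : ℝ)
    (hconc : ∀ i, ENNReal.ofReal (1 / 2 + η) ≤ μ {ω | |Y i ω - m| ≤ c})
    (α : ℝ) :
    ENNReal.ofReal (1 - Real.exp (-2 * k * max (η - α) 0 ^ 2)) ≤
      μ {ω | ∀ i : Fin k,
        (1 - 2 * α) * k / 2 ≤ (i : ℝ) + 1 → (i : ℝ) + 1 ≤ (1 + 2 * α) * k / 2 →
          |orderStat (fun j => Y j ω) i - m| ≤ c} := by
  rcases le_or_gt η α with hηα | hαη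
  · simp [max_eq_right (sub_nonpos.mpr hηα)]
  rw [max_eq_left (sub_pos.mpr hαη).le]
  set S : Set ℝ := {x | c < |x - m|}
  have hS : MeasurableSet S := measurableSet_lt measurable_const (measurable_id.sub_const m).abs
  have hbad (i : Fin k) : μ.real (Y i ⁻¹' S) ≤ 1 - (1 / 2 + η) := by
    rw [show Y i ⁻¹' S = {ω | |Y i ω - m| ≤ c}ᶜ by ext; simp [S]]
    exact probReal_compl_le_one_sub (measurableSet_le ((hmeas i).sub_const m).abs measurable_const)
      (hconc i)
  have htail := measureReal_le_card_filter_mem_le hmeas hindep hS hbad (sub_pos.mpr hαη).le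
  rw [Fintype.card_fin] at htail
  refine (ofReal_one_sub_le_prob_compl htail).trans (measure_mono fun ω hω i => ?_)
  refine abs_orderStat_sub_le_of_mem_window (lt_of_lt_of_eq (not_le.mp hω) ?_)
  ring

/-- Let `Y₁, …, Y_k` be independent real random variables with
`P(|Y_i − μ| ≤ c) ≥ 1/2 + η` for all `i`, where `η > 0`.  Then for any `α ≥ 0`,
with probability at least `1 − exp(−2k·max(η − α, 0)²)`, every order statistic
`Y_{(i)}` with `(1 − 2α)k/2 ≤ i ≤ (1 + 2α)k/2` satisfies `|Y_{(i)} − μ| ≤ c`. -/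
theorem orderStat_concentration {Ω : Type*} [MeasurableSpace Ω] (μ : Measure Ω)
    [IsProbabilityMeasure μ] {k : ℕ} (Y : Fin k → Ω → ℝ)
    (hmeas : ∀ i, Measurable (Y i))
    (hindep : ProbabilityTheory.iIndepFun Y μ)
    (m c η : ℝ) (hη : 0 < η)
    (hconc : ∀ i, ENNReal.ofReal (1 / 2 + η) ≤ μ {ω | |Y i ω - m| ≤ c})
    (α : ℝ) (hα : 0 ≤ α) :
    ENNReal.ofReal (1 - Real.exp (-2 * k * max (η - α) 0 ^ 2)) ≤
      μ {ω | ∀ i : Fin k,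
        (1 - 2 * α) * k / 2 ≤ (i : ℝ) + 1 → (i : ℝ) + 1 ≤ (1 + 2 * α) * k / 2 →
          |orderStat (fun j => Y j ω) i - m| ≤ c} :=
  orderStat_concentration_general μ Y hmeas hindep m c η hconc α
end

section
/- Let L : ℝ^d → ℝ be convex and twice continuously differentiable with ℓ₂-Lipschitz Hessian (constant L₂). Suppose θ ∈ ℝ^d satisfies ∇²L(θ) ⪰ λI for some λ > 0, and let w ∈ ℝ^d satisfy ‖∇L(θ) + w‖ < λ²/(6L₂). Then the minimizer θ_w of L(·) + ⟨w, ·⟩ exists and satisfies ‖θ − θ_w‖ ≤ 2‖∇L(θ) + w‖/λ. -/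
/-!
Put `F = L + ⟪w, ·⟫` and `g = ∇F(θ) = ∇L(θ) + w`; `F` has the Hessian of `L`, so
`∇²F(u) ⪰ (λ - L₂‖u - θ‖) I`. Integrating this along rays from `θ` gives the cubic bounds
`⟪∇F(θ + h), h⟫ ≥ ⟪g, h⟫ + λ‖h‖² - L₂‖h‖³/2` and `F(θ + h) ≥ F(θ) + ⟪g, h⟫ + λ‖h‖²/2 - L₂‖h‖³/6`.
On the sphere of radius `r = λ/(2L₂)` the second one gives `F > F(θ)` as soon as
`‖g‖ < λ²/(6L₂)`, and by convexity then `F > F(θ)` outside the ball: a minimizer exists and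
every minimizer lies inside the ball. There `∇F = 0`, and the first bound with `L₂‖h‖ < λ/2`
yields `3λ‖h‖²/4 ≤ ‖g‖‖h‖`.
-/

open Set

theorem sub_le_sub_of_hasDerivAt_le {f g f' g' : ℝ → ℝ} {a b : ℝ} (hab : a ≤ b)
    (hf : ∀ t ∈ Icc a b, HasDerivAt f (f' t) t) (hg : ∀ t ∈ Icc a b, HasDerivAt g (g' t) t)
    (hle : ∀ t ∈ Icc a b, g' t ≤ f' t) : g b - g a ≤ f b - f a := by
  have hmono : MonotoneOn (fun t => f t - g t) (Icc a b) :=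
    monotoneOn_of_hasDerivWithinAt_nonneg (convex_Icc a b)
      (fun t ht => ((hf t ht).sub (hg t ht)).continuousAt.continuousWithinAt)
      (fun t ht => ((hf t (interior_subset ht)).sub (hg t (interior_subset ht))).hasDerivWithinAt)
      (fun t ht => sub_nonneg.2 (hle t (interior_subset ht)))
  linarith [hmono (left_mem_Icc.2 hab) (right_mem_Icc.2 hab) hab]

theorem exists_isMinOn_of_le_of_lt_norm_sub {E : Type*} [NormedAddCommGroup E] [ProperSpace E]
    {f : E → ℝ} (hf : Continuous f) {x₀ : E} {r : ℝ}
    (hout : ∀ u, r < ‖u - x₀‖ → f x₀ ≤ f u) : ∃ x, IsMinOn f univ x := by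
  obtain ⟨x, hx⟩ := hf.exists_forall_le' x₀ <|
    Filter.mem_of_superset (isCompact_closedBall x₀ r).compl_mem_cocompact fun u hu =>
      hout u (by simpa [dist_eq_norm] using hu)
  exact ⟨x, fun y _ => hx y⟩

section HessianLipschitz

variable {E : Type*} [NormedAddCommGroup E] [NormedSpace ℝ E] {f : E → ℝ} {L₂ lam : ℝ} {θ : E}

theorem hasDerivAt_add_smul (θ h : E) (t : ℝ) : HasDerivAt (fun s : ℝ => θ + s • h) h t := by
  simpa using ((hasDerivAt_id t).smul_const h).const_add θ

theorem sub_mul_sq_le_hessian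
    (hlip : ∀ u v, ‖fderiv ℝ (fderiv ℝ f) u - fderiv ℝ (fderiv ℝ f) v‖ ≤ L₂ * ‖u - v‖)
    (hpos : ∀ h, lam * ‖h‖ ^ 2 ≤ fderiv ℝ (fderiv ℝ f) θ h h) (u h : E) :
    (lam - L₂ * ‖u - θ‖) * ‖h‖ ^ 2 ≤ fderiv ℝ (fderiv ℝ f) u h h := by
  set D := fderiv ℝ (fderiv ℝ f) u - fderiv ℝ (fderiv ℝ f) θ
  have hD : |D h h| ≤ L₂ * ‖u - θ‖ * ‖h‖ ^ 2 :=
    calc |D h h| ≤ ‖D‖ * ‖h‖ * ‖h‖ := D.le_opNorm₂ h h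
      _ ≤ L₂ * ‖u - θ‖ * ‖h‖ * ‖h‖ := by gcongr; exact hlip u θ
      _ = L₂ * ‖u - θ‖ * ‖h‖ ^ 2 := by ring
  have hsplit : fderiv ℝ (fderiv ℝ f) u h h = fderiv ℝ (fderiv ℝ f) θ h h + D h h := by
    simp [D]
  linarith [hpos h, (abs_le.1 hD).1]

theorem le_fderiv_add_smul_apply (hf' : Differentiable ℝ (fderiv ℝ f))
    (hlip : ∀ u v, ‖fderiv ℝ (fderiv ℝ f) u - fderiv ℝ (fderiv ℝ f) v‖ ≤ L₂ * ‖u - v‖)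
    (hpos : ∀ h, lam * ‖h‖ ^ 2 ≤ fderiv ℝ (fderiv ℝ f) θ h h) (h : E) {t : ℝ} (ht : 0 ≤ t) :
    fderiv ℝ f θ h + lam * t * ‖h‖ ^ 2 - L₂ / 2 * t ^ 2 * ‖h‖ ^ 3
      ≤ fderiv ℝ f (θ + t • h) h := by
  have key := sub_le_sub_of_hasDerivAt_le ht
    (f := fun s => fderiv ℝ f (θ + s • h) h)
    (g := fun s => lam * s * ‖h‖ ^ 2 - L₂ / 2 * s ^ 2 * ‖h‖ ^ 3)
    (g' := fun s => (lam - L₂ * (s * ‖h‖)) * ‖h‖ ^ 2)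
    (fun s _ => by
      simpa using (((hf' _).hasFDerivAt.comp_hasDerivAt s (hasDerivAt_add_smul θ h s)).clm_apply
        (hasDerivAt_const s h)))
    (fun s _ => by
      have := (((hasDerivAt_id s).const_mul lam).mul_const (‖h‖ ^ 2)).sub
        (((hasDerivAt_pow 2 s).const_mul (L₂ / 2)).mul_const (‖h‖ ^ 3))
      exact this.congr_deriv (by simp; ring))
    (fun s hs => by
      have hnorm : ‖θ + s • h - θ‖ = s * ‖h‖ := by
        rw [add_sub_cancel_left, norm_smul, Real.norm_of_nonneg hs.1]
      have := sub_mul_sq_le_hessian hlip hpos (θ + s • h) h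
      rwa [hnorm] at this)
  simp only [zero_smul, add_zero, mul_zero, zero_mul, ne_eq, OfNat.ofNat_ne_zero,
    not_false_eq_true, zero_pow, sub_zero] at key
  linarith

theorem le_apply_add_of_hessian (hf : Differentiable ℝ f) (hf' : Differentiable ℝ (fderiv ℝ f))
    (hlip : ∀ u v, ‖fderiv ℝ (fderiv ℝ f) u - fderiv ℝ (fderiv ℝ f) v‖ ≤ L₂ * ‖u - v‖)
    (hpos : ∀ h, lam * ‖h‖ ^ 2 ≤ fderiv ℝ (fderiv ℝ f) θ h h) (h : E) :
    f θ + fderiv ℝ f θ h + lam / 2 * ‖h‖ ^ 2 - L₂ / 6 * ‖h‖ ^ 3 ≤ f (θ + h) := by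
  have key := sub_le_sub_of_hasDerivAt_le zero_le_one
    (f := fun s => f (θ + s • h))
    (g := fun s => s * fderiv ℝ f θ h + lam / 2 * s ^ 2 * ‖h‖ ^ 2 - L₂ / 6 * s ^ 3 * ‖h‖ ^ 3)
    (g' := fun s => fderiv ℝ f θ h + lam * s * ‖h‖ ^ 2 - L₂ / 2 * s ^ 2 * ‖h‖ ^ 3)
    (fun s _ => (hf _).hasFDerivAt.comp_hasDerivAt s (hasDerivAt_add_smul θ h s))
    (fun s _ => by
      have := (((hasDerivAt_id s).mul_const (fderiv ℝ f θ h)).add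
        (((hasDerivAt_pow 2 s).const_mul (lam / 2)).mul_const (‖h‖ ^ 2))).sub
        (((hasDerivAt_pow 3 s).const_mul (L₂ / 6)).mul_const (‖h‖ ^ 3))
      exact this.congr_deriv (by simp; ring))
    (fun s hs => by
      have := le_fderiv_add_smul_apply hf' hlip hpos h hs.1
      linarith)
  simp only [zero_smul, add_zero, one_smul, mul_zero, zero_mul, mul_one, one_pow, ne_eq,
    OfNat.ofNat_ne_zero, not_false_eq_true, zero_pow, sub_zero] at key
  linarith

theorem lt_apply_add_of_hessian (hf : Differentiable ℝ f) (hf' : Differentiable ℝ (fderiv ℝ f))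
    (hlip : ∀ u v, ‖fderiv ℝ (fderiv ℝ f) u - fderiv ℝ (fderiv ℝ f) v‖ ≤ L₂ * ‖u - v‖)
    (hpos : ∀ h, lam * ‖h‖ ^ 2 ≤ fderiv ℝ (fderiv ℝ f) θ h h) {h : E}
    (hnear : L₂ * ‖h‖ ≤ lam / 2) (hfar : 3 * ‖fderiv ℝ f θ‖ < lam * ‖h‖) :
    f θ < f (θ + h) := by
  have htaylor := le_apply_add_of_hessian hf hf' hlip hpos h
  have hlin : -(‖fderiv ℝ f θ‖ * ‖h‖) ≤ fderiv ℝ f θ h :=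
    (abs_le.1 ((fderiv ℝ f θ).le_opNorm h)).1
  have hcubic : L₂ / 6 * ‖h‖ ^ 3 ≤ lam / 12 * ‖h‖ ^ 2 := by
    nlinarith [sq_nonneg ‖h‖]
  have hfar' : 0 < lam * ‖h‖ := by linarith [norm_nonneg (fderiv ℝ f θ)]
  have hh : 0 < ‖h‖ := (norm_nonneg h).lt_of_ne fun h0 => by
    rw [← h0, mul_zero] at hfar'
    exact hfar'.false
  nlinarith [mul_lt_mul_of_pos_right hfar hh, mul_pos hfar' hh]

theorem norm_sub_le_of_fderiv_eq_zero (hf' : Differentiable ℝ (fderiv ℝ f))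
    (hlip : ∀ u v, ‖fderiv ℝ (fderiv ℝ f) u - fderiv ℝ (fderiv ℝ f) v‖ ≤ L₂ * ‖u - v‖)
    (hpos : ∀ h, lam * ‖h‖ ^ 2 ≤ fderiv ℝ (fderiv ℝ f) θ h h) (hlam : 0 < lam) {x : E}
    (hx : fderiv ℝ f x = 0) (hnear : L₂ * ‖x - θ‖ ≤ lam / 2) :
    ‖x - θ‖ ≤ 2 * ‖fderiv ℝ f θ‖ / lam := by
  have hgrowth := le_fderiv_add_smul_apply hf' hlip hpos (x - θ) zero_le_one
  rw [one_smul, add_sub_cancel, hx, zero_apply] at hgrowth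
  have hlin : -(‖fderiv ℝ f θ‖ * ‖x - θ‖) ≤ fderiv ℝ f θ (x - θ) :=
    (abs_le.1 ((fderiv ℝ f θ).le_opNorm (x - θ))).1
  have hcubic : L₂ / 2 * ‖x - θ‖ ^ 3 ≤ lam / 4 * ‖x - θ‖ ^ 2 := by
    nlinarith [sq_nonneg ‖x - θ‖]
  rw [le_div_iff₀ hlam]
  nlinarith [norm_nonneg (fderiv ℝ f θ), norm_nonneg (x - θ)]

theorem ConvexOn.lt_of_lt_on_sphere (hf : ConvexOn ℝ univ f) {x₀ : E} {r : ℝ} (hr : 0 < r)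
    (hsphere : ∀ h, ‖h‖ = r → f x₀ < f (x₀ + h)) {u : E} (hu : r ≤ ‖u - x₀‖) : f x₀ < f u := by
  have hu0 : 0 < ‖u - x₀‖ := hr.trans_le hu
  set t := r / ‖u - x₀‖
  have ht0 : 0 < t := div_pos hr hu0
  have ht1 : t ≤ 1 := div_le_one_of_le₀ hu (norm_nonneg _)
  have hsph : f x₀ < f ((1 - t) • x₀ + t • u) := by
    have hnorm : ‖t • (u - x₀)‖ = r := by
      rw [norm_smul, Real.norm_of_nonneg ht0.le, div_mul_cancel₀ r hu0.ne']
    convert hsphere _ hnorm using 2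
    module
  have hchord := hf.2 (mem_univ x₀) (mem_univ u) (sub_nonneg.2 ht1) ht0.le (sub_add_cancel 1 t)
  simp only [smul_eq_mul] at hchord
  have hscaled : t * f x₀ < t * f u := by linarith
  exact lt_of_mul_lt_mul_left hscaled ht0.le

theorem fderiv_add_continuousLinearMap (hf : Differentiable ℝ f) (ℓ : E →L[ℝ] ℝ) :
    fderiv ℝ (fun u => f u + ℓ u) = fun u => fderiv ℝ f u + ℓ :=
  funext fun u => ((hf u).hasFDerivAt.add ℓ.hasFDerivAt).fderiv

theorem fderiv_fderiv_add_continuousLinearMap (hf : Differentiable ℝ f) (ℓ : E →L[ℝ] ℝ) :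
    fderiv ℝ (fderiv ℝ fun u => f u + ℓ u) = fderiv ℝ (fderiv ℝ f) := by
  rw [fderiv_add_continuousLinearMap hf]
  exact funext fun u => fderiv_add_const ℓ

theorem exists_isMinOn_and_norm_sub_le_of_hessian [ProperSpace E] (hlam : 0 < lam)
    (hL₂ : 0 < L₂) (hconv : ConvexOn ℝ univ f) (hf : Differentiable ℝ f)
    (hf' : Differentiable ℝ (fderiv ℝ f))
    (hlip : ∀ u v, ‖fderiv ℝ (fderiv ℝ f) u - fderiv ℝ (fderiv ℝ f) v‖ ≤ L₂ * ‖u - v‖)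
    (hpos : ∀ h, lam * ‖h‖ ^ 2 ≤ fderiv ℝ (fderiv ℝ f) θ h h)
    (hsmall : ‖fderiv ℝ f θ‖ < lam ^ 2 / (6 * L₂)) :
    (∃ x, IsMinOn f univ x) ∧ ∀ x, IsMinOn f univ x → ‖θ - x‖ ≤ 2 * ‖fderiv ℝ f θ‖ / lam := by
  set r := lam / (2 * L₂)
  have hr : 0 < r := by positivity
  have hLr : L₂ * r = lam / 2 := by simp only [r]; field_simp
  have hsphere : ∀ h, ‖h‖ = r → f θ < f (θ + h) := fun h hh =>
    lt_apply_add_of_hessian hf hf' hlip hpos (by rw [hh, hLr]) <| by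
      rw [hh, show lam * r = 3 * (lam ^ 2 / (6 * L₂)) by simp only [r]; field_simp; ring]
      linarith
  have hout : ∀ u, r ≤ ‖u - θ‖ → f θ < f u := fun u => hconv.lt_of_lt_on_sphere hr hsphere
  refine ⟨exists_isMinOn_of_le_of_lt_norm_sub hf.continuous fun u hu => (hout u hu.le).le,
    fun x hx => ?_⟩
  have hnear : ‖x - θ‖ < r := by
    by_contra! hfar
    exact (hout x hfar).not_ge (hx (mem_univ θ))
  rw [norm_sub_rev]
  exact norm_sub_le_of_fderiv_eq_zero hf' hlip hpos hlam
    (hx.isLocalMin Filter.univ_mem).fderiv_eq_zero (by nlinarith)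

end HessianLipschitz

/-- Localization of minimizers of tilted convex functions.  Let `L : ℝ^d → ℝ` be convex and
`C²` with `L₂`-Lipschitz Hessian.  If `∇²L(θ) ⪰ λ I` and `‖∇L(θ) + w‖ < λ²/(6 L₂)`, then the
minimizer `θ_w` of `L(·) + ⟨w, ·⟩` exists and every such minimizer satisfies
`‖θ − θ_w‖ ≤ 2‖∇L(θ) + w‖/λ`. -/
theorem tilted_minimizer_localization {d : ℕ}
    (L : EuclideanSpace ℝ (Fin d) → ℝ) (L₂ lam : ℝ) (hlam : 0 < lam) (hL₂ : 0 < L₂)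
    (hconv : ConvexOn ℝ Set.univ L) (hsmooth : ContDiff ℝ 2 L)
    (hlip : ∀ u v, ‖fderiv ℝ (fderiv ℝ L) u - fderiv ℝ (fderiv ℝ L) v‖ ≤ L₂ * ‖u - v‖)
    (θ : EuclideanSpace ℝ (Fin d))
    (hpos : ∀ h : EuclideanSpace ℝ (Fin d), lam * ‖h‖ ^ 2 ≤ fderiv ℝ (fderiv ℝ L) θ h h)
    (w : EuclideanSpace ℝ (Fin d))
    (hw : ‖gradient L θ + w‖ < lam ^ 2 / (6 * L₂)) :
    (∃ θw, IsMinOn (fun u => L u + (inner ℝ w u : ℝ)) Set.univ θw)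
      ∧ ∀ θw, IsMinOn (fun u => L u + (inner ℝ w u : ℝ)) Set.univ θw →
          ‖θ - θw‖ ≤ 2 * ‖gradient L θ + w‖ / lam := by
  have hL : Differentiable ℝ L := hsmooth.differentiable (by norm_num)
  have hL' : Differentiable ℝ (fderiv ℝ L) :=
    (hsmooth.fderiv_right (m := 1) (by norm_num)).differentiable (by norm_num)
  let ℓ := InnerProductSpace.toDual ℝ _ w
  have htilt : (fun u => L u + (inner ℝ w u : ℝ)) = fun u => L u + ℓ u := by
    simp [ℓ, InnerProductSpace.toDual_apply_apply]
  have hgrad : ‖fderiv ℝ (fun u => L u + ℓ u) θ‖ = ‖gradient L θ + w‖ := by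
    rw [← (InnerProductSpace.toDual ℝ _).norm_map (gradient L θ + w), map_add,
      fderiv_add_continuousLinearMap hL]
    simp [gradient, ℓ]
  rw [htilt, ← hgrad]
  refine exists_isMinOn_and_norm_sub_le_of_hessian hlam hL₂
    (hconv.add (ℓ.toLinearMap.convexOn convex_univ)) (hL.add ℓ.differentiable) ?_ ?_ ?_
    (hgrad ▸ hw)
  · rw [fderiv_add_continuousLinearMap hL]
    exact hL'.add_const ℓ
  · rwa [fderiv_fderiv_add_continuousLinearMap hL]
  · rwa [fderiv_fderiv_add_continuousLinearMap hL]
end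

section
/- Let A₁,…,A_n be d×d Hermitian matrices with Σᵢ Aᵢ = 0, let π be a uniformly random permutation of {1,…,n}, and let X = Σ_{i=1}^m A_{π(i)} for some m ≤ n. Let π' be obtained from π by swapping two elements chosen uniformly at random, and X' = Σ_{i=1}^m A_{π'(i)}. Then E[X − X' | π] = (2/(n−1))·X, i.e., (X, X') forms a matrix Stein pair with α = 2/(n−1). -/
/-!
Swapping positions `j` and `k` of `π` only changes the summands at `j` and `k`, so
`X − X'` is `𝟙[j < m] (A_{π j} − A_{π k}) + 𝟙[k < m] (A_{π k} − A_{π j})`; this also holds,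
trivially, for `j = k`. Summing over all `j, k` and using `Σ A_{π k} = 0` gives `2n X`, and
dividing by the `n(n − 1)` ordered pairs of distinct positions gives `(2 / (n − 1)) X`.
-/

open Finset

/-- The subsampled sum `X(σ) = Σ_{i=1}^m A_{σ(i)}`. -/
noncomputable def subsampleSum {n d : ℕ} (m : ℕ) (A : Fin n → Matrix (Fin d) (Fin d) ℂ)
    (σ : Equiv.Perm (Fin n)) : Matrix (Fin d) (Fin d) ℂ :=
  ∑ i : Fin n, if (i : ℕ) < m then A (σ i) else 0

section

variable {ι M : Type*} [Fintype ι] [AddCommGroup M]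
  (p : ι → Prop) [DecidablePred p] (a : ι → M) (σ : Equiv.Perm ι)

theorem sum_ite_sub_sum_ite_mul_swap [DecidableEq ι] (j k : ι) :
    (∑ i, if p i then a (σ i) else 0) - (∑ i, if p i then a ((σ * Equiv.swap j k) i) else 0)
      = (if p j then a (σ j) - a (σ k) else 0) + (if p k then a (σ k) - a (σ j) else 0) := by
  obtain rfl | hjk := eq_or_ne j k
  · simp
  rw [← sum_sub_distrib, ← sum_subset (subset_univ {j, k}), sum_pair hjk]
  · simp only [Equiv.Perm.mul_apply, Equiv.swap_apply_left, Equiv.swap_apply_right]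
    split_ifs <;> simp
  · intro i _ hi
    simp only [mem_insert, mem_singleton, not_or] at hi
    rw [Equiv.Perm.mul_apply, Equiv.swap_apply_of_ne_of_ne hi.1 hi.2, sub_self]

theorem sum_sum_ite_sub_of_sum_eq_zero (hsum : ∑ i, a i = 0) :
    ∑ j, ∑ k, (if p j then a (σ j) - a (σ k) else 0)
      = Fintype.card ι • ∑ i, if p i then a (σ i) else 0 := by
  have hσ : ∑ k, a (σ k) = 0 := (Equiv.sum_comp σ a).trans hsum
  rw [smul_sum]
  refine sum_congr rfl fun j _ => ?_
  split_ifs <;> simp [sum_sub_distrib, hσ]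

theorem sum_sum_sub_sum_ite_mul_swap [DecidableEq ι] (hsum : ∑ i, a i = 0) :
    ∑ j, ∑ k, ((∑ i, if p i then a (σ i) else 0)
        - ∑ i, if p i then a ((σ * Equiv.swap j k : Equiv.Perm ι) i) else 0)
      = (2 * Fintype.card ι) • ∑ i, if p i then a (σ i) else 0 := by
  simp only [sum_ite_sub_sum_ite_mul_swap, sum_add_distrib]
  rw [sum_comm (f := fun j k => if p k then a (σ k) - a (σ j) else 0),
    sum_sum_ite_sub_of_sum_eq_zero p a σ hsum, two_mul, add_smul]

end

theorem matrix_stein_pair_general {n d m : ℕ} (hn : 2 ≤ n)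
    (A : Fin n → Matrix (Fin d) (Fin d) ℂ)
    (hsum : ∑ i, A i = 0) (π : Equiv.Perm (Fin n)) :
    (((n : ℂ) * ((n : ℂ) - 1))⁻¹ •
        ∑ J : Fin n, ∑ K : Fin n,
          if J ≠ K then
            subsampleSum m A π - subsampleSum m A (π * Equiv.swap J K)
          else 0)
      = (2 / ((n : ℂ) - 1)) • subsampleSum m A π := by
  have hdiag : ∀ J K : Fin n,
      (if J ≠ K then subsampleSum m A π - subsampleSum m A (π * Equiv.swap J K) else 0)
        = subsampleSum m A π - subsampleSum m A (π * Equiv.swap J K) := by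
    intro J K
    split_ifs with hJK
    · rfl
    · rw [not_not.mp hJK, Equiv.swap_self, ← Equiv.Perm.one_def, mul_one, sub_self]
  have hn0 : (n : ℂ) ≠ 0 := Nat.cast_ne_zero.mpr (by omega)
  simp only [hdiag]
  unfold subsampleSum
  rw [sum_sum_sub_sum_ite_mul_swap _ A π hsum, Fintype.card_fin, ← Nat.cast_smul_eq_nsmul ℂ,
    smul_smul]
  congr 1
  push_cast
  field_simp

/-- Matrix Stein pair from subsampling: if `A₁, …, A_n` are Hermitian with `Σᵢ Aᵢ = 0`,
`X = Σ_{i=1}^m A_{π(i)}`, and `X'` is obtained by swapping two uniformly random positions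
of `π`, then `E[X − X' | π] = (2/(n−1))·X`: averaging `X − X'` over the uniformly random
transposed pair equals `(2/(n−1)) X`. -/
theorem matrix_stein_pair {n d m : ℕ} (hn : 2 ≤ n) (hm : m ≤ n)
    (A : Fin n → Matrix (Fin d) (Fin d) ℂ) (hherm : ∀ i, (A i).IsHermitian)
    (hsum : ∑ i, A i = 0) (π : Equiv.Perm (Fin n)) :
    (((n : ℂ) * ((n : ℂ) - 1))⁻¹ •
        ∑ J : Fin n, ∑ K : Fin n,
          if J ≠ K then
            subsampleSum m A π - subsampleSum m A (π * Equiv.swap J K)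
          else 0)
      = (2 / ((n : ℂ) - 1)) • subsampleSum m A π :=
  matrix_stein_pair_general hn A hsum π
end

section
/- Let A₁,…,A_n be d×d Hermitian matrices with Σᵢ Aᵢ = 0 and ‖Aᵢ − A_j‖_op ≤ b for all i,j. Let π be a uniformly random permutation of {1,…,n} and X = Σ_{i=1}^m A_{π(i)}. Then for all t ≥ 0, P(λ_min(X) ≤ −t) ≤ d·exp(−t²/(m b²)) and P(λ_max(X) ≥ t) ≤ d·exp(−t²/(m b²)). -/
/-
Matrix Laplace transform method with exchangeable pairs. Let `F(θ) = ∑_π tr exp(θ X_π)`.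
Exchanging an index `i < m` with an index `j ≥ m` of `π` gives an exchangeable pair `(X, X')`
with `X - X' = A_{π i} - A_{π j}`, and summing over all such pairs gives `n X` because
`∑ A_i = 0`. The mean value trace inequality
`θ tr((e^{θA} - e^{θB})(A - B)) ≤ (θ² / 2) tr((e^{θA} + e^{θB})(A - B)²)`, which in a pair of
eigenbases reduces to a scalar inequality for `exp`, together with `‖X - X'‖ ≤ b` yields
`θ F'(θ) ≤ (m b² / 2) θ² F(θ)`. Integrating this (Herbst's argument) gives
`F(θ) ≤ F(0) exp(m b² θ² / 4)`, and Markov's inequality at `θ = ±2t / (m b²)` gives both tails.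
-/

open Finset Real

open Matrix Unitary

namespace Matrix.IsHermitian

variable {ι : Type*} [Fintype ι] [DecidableEq ι] {A B : Matrix ι ι ℂ}

local notation "𝐔" h:max => (Matrix.IsHermitian.eigenvectorUnitary h : Matrix ι ι ℂ)

lemma trace_cfc_mul (hA : A.IsHermitian) (f : ℝ → ℝ) (N : Matrix ι ι ℂ) :
    (hA.cfc f * N).trace = ∑ i, (f (hA.eigenvalues i) : ℂ) * (star (𝐔 hA) * N * 𝐔 hA) i i := by
  rw [IsHermitian.cfc, conjStarAlgAut_apply, mul_assoc, mul_assoc, trace_mul_comm, mul_assoc]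
  simp [trace, Matrix.diagonal_mul, mul_assoc]

lemma star_eigenvectorUnitary_mul_mul_eigenvectorUnitary (hA : A.IsHermitian) :
    star (𝐔 hA) * A * 𝐔 hA = diagonal (fun i => (hA.eigenvalues i : ℂ)) := by
  simpa [conjStarAlgAut_apply, Function.comp_def] using hA.conjStarAlgAut_star_eigenvectorUnitary

lemma star_eigenvectorUnitary_mul (hA : A.IsHermitian) :
    star (𝐔 hA) * A = diagonal (fun i => (hA.eigenvalues i : ℂ)) * star (𝐔 hA) := by
  rw [← star_eigenvectorUnitary_mul_mul_eigenvectorUnitary hA, mul_assoc _ (𝐔 hA),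
    mul_star_self_of_mem (SetLike.coe_mem _), mul_one]

lemma mul_eigenvectorUnitary (hA : A.IsHermitian) :
    A * 𝐔 hA = 𝐔 hA * diagonal (fun i => (hA.eigenvalues i : ℂ)) := by
  rw [← star_eigenvectorUnitary_mul_mul_eigenvectorUnitary hA, ← mul_assoc, ← mul_assoc,
    mul_star_self_of_mem (SetLike.coe_mem _), one_mul]

lemma star_eigenvectorUnitary_mul_sub_mul_apply (hA : A.IsHermitian) (hB : B.IsHermitian)
    (i j : ι) :
    (star (𝐔 hA) * (A - B) * 𝐔 hB) i j =
      (hA.eigenvalues i - hB.eigenvalues j : ℝ) * (star (𝐔 hA) * 𝐔 hB) i j := by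
  rw [mul_sub, sub_mul, star_eigenvectorUnitary_mul hA, mul_assoc (diagonal _),
    mul_assoc (star _) B, mul_eigenvectorUnitary hB, ← mul_assoc (star _)]
  simp only [sub_apply, diagonal_mul, mul_diagonal]
  push_cast
  ring

/-- `|⟪u i, v j⟫|²` for the eigenvector bases `u` of `A` and `v` of `B`. -/
noncomputable def eigenOverlap (hA : A.IsHermitian) (hB : B.IsHermitian) (i j : ι) : ℝ :=
  Complex.normSq ((star (𝐔 hA) * 𝐔 hB) i j)

lemma eigenOverlap_nonneg (hA : A.IsHermitian) (hB : B.IsHermitian) (i j : ι) :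
    0 ≤ hA.eigenOverlap hB i j :=
  Complex.normSq_nonneg _

lemma eigenOverlap_comm (hA : A.IsHermitian) (hB : B.IsHermitian) (i j : ι) :
    hB.eigenOverlap hA j i = hA.eigenOverlap hB i j := by
  rw [eigenOverlap, eigenOverlap, ← star_star (𝐔 hB), ← star_mul, star_star, star_apply,
    Complex.star_def, Complex.normSq_conj]

lemma re_trace_cfc_mul_sub (hA : A.IsHermitian) (hB : B.IsHermitian) (f : ℝ → ℝ) :
    (hA.cfc f * (A - B)).trace.re =
      ∑ i, ∑ j, f (hA.eigenvalues i) * (hA.eigenvalues i - hB.eigenvalues j) *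
        hA.eigenOverlap hB i j := by
  have hins : star (𝐔 hA) * (A - B) * 𝐔 hA =
      (star (𝐔 hA) * (A - B) * 𝐔 hB) * star (star (𝐔 hA) * 𝐔 hB) := by
    rw [star_mul, star_star, mul_assoc _ (𝐔 hB), ← mul_assoc (𝐔 hB),
      mul_star_self_of_mem (SetLike.coe_mem _), one_mul]
  rw [trace_cfc_mul, hins, Complex.re_sum]
  refine sum_congr rfl fun i _ => ?_
  rw [mul_apply, mul_sum, Complex.re_sum]
  refine sum_congr rfl fun j _ => ?_
  rw [star_eigenvectorUnitary_mul_sub_mul_apply, star_apply, Complex.star_def,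
    mul_assoc _ _ (starRingEnd ℂ _), Complex.mul_conj, ← Complex.ofReal_mul, ← Complex.ofReal_mul,
    Complex.ofReal_re, eigenOverlap, mul_assoc]

lemma re_trace_cfc_mul_sub_mul_sub (hA : A.IsHermitian) (hB : B.IsHermitian) (f : ℝ → ℝ) :
    (hA.cfc f * ((A - B) * (A - B))).trace.re =
      ∑ i, ∑ j, f (hA.eigenvalues i) * (hA.eigenvalues i - hB.eigenvalues j) ^ 2 *
        hA.eigenOverlap hB i j := by
  have hins : star (𝐔 hA) * ((A - B) * (A - B)) * 𝐔 hA =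
      (star (𝐔 hA) * (A - B) * 𝐔 hB) * star (star (𝐔 hA) * (A - B) * 𝐔 hB) := by
    rw [star_mul, star_mul, star_star, star_eq_conjTranspose (A - B), (hA.sub hB).eq]
    simp only [mul_assoc]
    rw [← mul_assoc (𝐔 hB), mul_star_self_of_mem (SetLike.coe_mem _), one_mul]
  rw [trace_cfc_mul, hins, Complex.re_sum]
  refine sum_congr rfl fun i _ => ?_
  rw [mul_apply, mul_sum, Complex.re_sum]
  refine sum_congr rfl fun j _ => ?_
  rw [star_apply, Complex.star_def, Complex.mul_conj, star_eigenvectorUnitary_mul_sub_mul_apply,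
    Complex.normSq_mul, Complex.normSq_ofReal, ← Complex.ofReal_mul, Complex.ofReal_re,
    eigenOverlap]
  ring

lemma re_trace_cfc_mul_self (hA : A.IsHermitian) (f : ℝ → ℝ) :
    (hA.cfc f * A).trace.re = ∑ i, hA.eigenvalues i * f (hA.eigenvalues i) := by
  rw [trace_cfc_mul, star_eigenvectorUnitary_mul_mul_eigenvectorUnitary, Complex.re_sum]
  refine sum_congr rfl fun i _ => ?_
  rw [diagonal_apply_eq, ← Complex.ofReal_mul, Complex.ofReal_re, mul_comm]

lemma re_trace_cfc_sub_mul_sub_le (hA : A.IsHermitian) (hB : B.IsHermitian) {f g : ℝ → ℝ}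
    (hfg : ∀ u v, (f u - f v) * (u - v) ≤ (u - v) ^ 2 * (g u + g v)) :
    ((hA.cfc f - hB.cfc f) * (A - B)).trace.re ≤
      ((hA.cfc g + hB.cfc g) * ((A - B) * (A - B))).trace.re := by
  have hBA : (hB.cfc f * (A - B)).trace.re =
      ∑ i, ∑ j, f (hB.eigenvalues j) * (hA.eigenvalues i - hB.eigenvalues j) *
        hA.eigenOverlap hB i j := by
    rw [← neg_sub B A, mul_neg, trace_neg, Complex.neg_re, re_trace_cfc_mul_sub hB hA, sum_comm,
      ← sum_neg_distrib]
    refine sum_congr rfl fun i _ => ?_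
    rw [← sum_neg_distrib]
    refine sum_congr rfl fun j _ => ?_
    rw [eigenOverlap_comm]
    ring
  have hBA2 : (hB.cfc g * ((A - B) * (A - B))).trace.re =
      ∑ i, ∑ j, g (hB.eigenvalues j) * (hA.eigenvalues i - hB.eigenvalues j) ^ 2 *
        hA.eigenOverlap hB i j := by
    rw [show (A - B) * (A - B) = (B - A) * (B - A) by noncomm_ring,
      re_trace_cfc_mul_sub_mul_sub hB hA, sum_comm]
    refine sum_congr rfl fun i _ => sum_congr rfl fun j _ => ?_
    rw [eigenOverlap_comm]
    ring
  rw [sub_mul, add_mul, trace_sub, trace_add, Complex.sub_re, Complex.add_re, hBA, hBA2,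
    re_trace_cfc_mul_sub hA hB, re_trace_cfc_mul_sub_mul_sub hA hB, ← sum_sub_distrib,
    ← sum_add_distrib]
  refine sum_le_sum fun i _ => ?_
  rw [← sum_sub_distrib, ← sum_add_distrib]
  refine sum_le_sum fun j _ => ?_
  have := mul_le_mul_of_nonneg_right (hfg (hA.eigenvalues i) (hB.eigenvalues j))
    (hA.eigenOverlap_nonneg hB i j)
  linarith

lemma star_eigenvectorUnitary_mul_sq_mul_apply {M : Matrix ι ι ℂ} (hM : M.IsHermitian)
    (hA : A.IsHermitian) (i : ι) :
    (star (𝐔 hA) * (M * M) * 𝐔 hA) i i =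
      ((‖toEuclideanCLM (𝕜 := ℂ) M (hA.eigenvectorBasis i)‖ ^ 2 : ℝ) : ℂ) := by
  have hsq : star (𝐔 hA) * (M * M) * 𝐔 hA = star (M * 𝐔 hA) * (M * 𝐔 hA) := by
    rw [star_mul, star_eq_conjTranspose M, hM.eq]
    simp only [mul_assoc]
  rw [hsq, mul_apply, EuclideanSpace.norm_sq_eq, Complex.ofReal_sum]
  refine sum_congr rfl fun k _ => ?_
  rw [star_apply, Complex.star_def, Complex.conj_mul', ofLp_toEuclideanCLM]
  push_cast
  rfl

lemma re_trace_cfc_mul_self_mul_le {M : Matrix ι ι ℂ} (hA : A.IsHermitian) {g : ℝ → ℝ}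
    (hg : ∀ x, 0 ≤ g x) (hM : M.IsHermitian) {b : ℝ}
    (hMb : ‖toEuclideanCLM (𝕜 := ℂ) M‖ ≤ b) :
    (hA.cfc g * (M * M)).trace.re ≤ b ^ 2 * ∑ i, g (hA.eigenvalues i) := by
  rw [trace_cfc_mul, Complex.re_sum, mul_sum]
  refine sum_le_sum fun i _ => ?_
  rw [star_eigenvectorUnitary_mul_sq_mul_apply hM, ← Complex.ofReal_mul, Complex.ofReal_re,
    mul_comm]
  refine mul_le_mul_of_nonneg_right ?_ (hg _)
  have hMu := (toEuclideanCLM (𝕜 := ℂ) M).le_of_opNorm_le hMb (hA.eigenvectorBasis i)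
  rw [hA.eigenvectorBasis.orthonormal.1 i, mul_one] at hMu
  exact pow_le_pow_left₀ (norm_nonneg _) hMu 2

end Matrix.IsHermitian

lemma exp_sub_one_le_mul_exp_add_one {s : ℝ} (hs : 0 ≤ s) :
    exp s - 1 ≤ s * (exp s + 1) / 2 := by
  set φ : ℝ → ℝ := fun x => x * (exp x + 1) / 2 - (exp x - 1)
  have hφ : ∀ x, HasDerivAt φ ((1 - exp x + x * exp x) / 2) x := fun x =>
    ((((hasDerivAt_id x).mul ((hasDerivAt_exp x).add_const 1)).div_const 2).sub
      ((hasDerivAt_exp x).sub_const 1)).congr_deriv (by simp only [id]; ring)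
  have hmono : MonotoneOn φ (Set.Ici 0) := by
    refine monotoneOn_of_hasDerivWithinAt_nonneg (convex_Ici 0)
      (fun x _ => (hφ x).continuousAt.continuousWithinAt) (fun x _ => (hφ x).hasDerivWithinAt)
      fun x _ => ?_
    have h := mul_le_mul_of_nonneg_left (by linarith [add_one_le_exp (-x)] : 1 - x ≤ exp (-x))
      (exp_pos x).le
    rw [← exp_add, add_neg_cancel, exp_zero] at h
    linarith
  have := hmono Set.self_mem_Ici hs hs
  simp only [φ, zero_mul, zero_div, exp_zero, sub_self] at this
  linarith

lemma exp_sub_exp_mul_sub_le (u v : ℝ) :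
    (exp u - exp v) * (u - v) ≤ (u - v) ^ 2 * (exp u + exp v) / 2 := by
  wlog h : v ≤ u generalizing u v
  · convert this v u (le_of_not_ge h) using 1 <;> ring
  have hs := mul_le_mul_of_nonneg_left (exp_sub_one_le_mul_exp_add_one (sub_nonneg.2 h))
    (mul_nonneg (exp_pos v).le (sub_nonneg.2 h))
  have hu : exp u = exp v * exp (u - v) := by rw [← exp_add, add_sub_cancel]
  rw [hu]
  linarith

lemma mul_exp_sub_mul_exp_mul_sub_le (θ u v : ℝ) :
    (θ * exp (θ * u) - θ * exp (θ * v)) * (u - v) ≤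
      (u - v) ^ 2 * (θ ^ 2 / 2 * exp (θ * u) + θ ^ 2 / 2 * exp (θ * v)) := by
  convert exp_sub_exp_mul_sub_le (θ * u) (θ * v) using 1 <;> ring

lemma le_mul_exp_sq_of_hasDerivAt {F F' : ℝ → ℝ} {c : ℝ} (hF : ∀ x, HasDerivAt F (F' x) x)
    (hF' : ∀ x, x * F' x ≤ c * x ^ 2 * F x) (θ : ℝ) : F θ ≤ F 0 * exp (c * θ ^ 2 / 2) := by
  set h : ℝ → ℝ := fun x => F x * exp (-c / 2 * x ^ 2)
  have hh : ∀ x, HasDerivAt h ((F' x - c * x * F x) * exp (-c / 2 * x ^ 2)) x := fun x =>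
    ((hF x).mul ((hasDerivAt_pow 2 x).const_mul (-c / 2)).exp).congr_deriv (by push_cast; ring)
  have hcont : Continuous h := continuous_iff_continuousAt.2 fun x => (hh x).continuousAt
  have key : h θ ≤ h 0 := by
    rcases le_total 0 θ with hθ | hθ
    · refine antitoneOn_of_hasDerivWithinAt_nonpos (convex_Ici 0) hcont.continuousOn
        (fun x _ => (hh x).hasDerivWithinAt) (fun x hx => ?_) Set.self_mem_Ici hθ hθ
      rw [interior_Ici, Set.mem_Ioi] at hx
      have : F' x - c * x * F x ≤ 0 := by nlinarith [hF' x]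
      exact mul_nonpos_of_nonpos_of_nonneg this (exp_pos _).le
    · refine monotoneOn_of_hasDerivWithinAt_nonneg (convex_Iic 0) hcont.continuousOn
        (fun x _ => (hh x).hasDerivWithinAt) (fun x hx => ?_) hθ Set.self_mem_Iic hθ
      rw [interior_Iic, Set.mem_Iio] at hx
      have : 0 ≤ F' x - c * x * F x := by nlinarith [hF' x]
      exact mul_nonneg this (exp_pos _).le
  calc F θ = h θ * exp (c * θ ^ 2 / 2) := by
        rw [mul_assoc, ← exp_add, show -c / 2 * θ ^ 2 + c * θ ^ 2 / 2 = 0 by ring, exp_zero,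
          mul_one]
    _ ≤ h 0 * exp (c * θ ^ 2 / 2) := mul_le_mul_of_nonneg_right key (exp_pos _).le
    _ = F 0 * exp (c * θ ^ 2 / 2) := by simp [h]

lemma exp_mul_le_sum_exp_of_le_iSup {ι : Type*} [Fintype ι] [Nonempty ι] {v : ι → ℝ} {θ t : ℝ}
    (hθ : 0 ≤ θ) (ht : t ≤ ⨆ i, v i) : exp (θ * t) ≤ ∑ i, exp (θ * v i) := by
  obtain ⟨i, hi⟩ := Finite.exists_max v
  calc exp (θ * t) ≤ exp (θ * v i) :=
        exp_le_exp.2 (mul_le_mul_of_nonneg_left (ht.trans (ciSup_le hi)) hθ)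
    _ ≤ ∑ i, exp (θ * v i) :=
        single_le_sum (f := fun j => exp (θ * v j)) (fun j _ => (exp_pos _).le) (mem_univ i)

lemma exp_mul_le_sum_exp_of_iInf_le {ι : Type*} [Fintype ι] [Nonempty ι] {v : ι → ℝ} {θ t : ℝ}
    (hθ : 0 ≤ θ) (ht : ⨅ i, v i ≤ -t) : exp (θ * t) ≤ ∑ i, exp (-θ * v i) := by
  obtain ⟨i, hi⟩ := Finite.exists_min v
  calc exp (θ * t) ≤ exp (-θ * v i) := by
        have := mul_le_mul_of_nonneg_left ((le_ciInf hi).trans ht) hθ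
        exact exp_le_exp.2 (by linarith)
    _ ≤ ∑ i, exp (-θ * v i) :=
        single_le_sum (f := fun j => exp (-θ * v j)) (fun j _ => (exp_pos _).le) (mem_univ i)

lemma natCard_mul_le_sum {Ω : Type*} [Fintype Ω] {P : Ω → Prop} {a : ℝ} {g : Ω → ℝ}
    (hg : ∀ ω, 0 ≤ g ω) (h : ∀ ω, P ω → a ≤ g ω) : Nat.card {ω // P ω} * a ≤ ∑ ω, g ω := by
  classical
  rw [Nat.card_eq_fintype_card, Fintype.card_subtype, ← nsmul_eq_mul]
  exact (card_nsmul_le_sum _ _ _ fun ω hω => h ω (mem_filter.1 hω).2).trans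
    (sum_le_sum_of_subset_of_nonneg (subset_univ _) fun ω _ _ => hg ω)

section SpectralSum

variable {Ω ι : Type*} [Fintype Ω] [Fintype ι] [DecidableEq ι] {X : Ω → Matrix ι ι ℂ}

/-- `∑ ω, tr φ(X ω)`; for `φ = exp (θ * ·)` this is `|Ω|` times the trace m.g.f. of `X`
under the uniform distribution on `Ω`. -/
noncomputable def spectralSum (hX : ∀ ω, (X ω).IsHermitian) (φ : ℝ → ℝ) : ℝ :=
  ∑ ω, ∑ i, φ ((hX ω).eigenvalues i)

lemma spectralSum_nonneg (hX : ∀ ω, (X ω).IsHermitian) {φ : ℝ → ℝ} (hφ : ∀ x, 0 ≤ φ x) :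
    0 ≤ spectralSum hX φ :=
  sum_nonneg fun _ _ => sum_nonneg fun _ _ => hφ _

lemma spectralSum_const_mul (hX : ∀ ω, (X ω).IsHermitian) (a : ℝ) (φ : ℝ → ℝ) :
    spectralSum hX (fun x => a * φ x) = a * spectralSum hX φ := by
  simp only [spectralSum, mul_sum]

lemma hasDerivAt_spectralSum_exp (hX : ∀ ω, (X ω).IsHermitian) (θ : ℝ) :
    HasDerivAt (fun θ => spectralSum hX fun x => exp (θ * x))
      (spectralSum hX fun x => x * exp (θ * x)) θ :=
  HasDerivAt.fun_sum fun _ _ => HasDerivAt.fun_sum fun _ _ =>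
    ((hasDerivAt_mul_const _).exp).congr_deriv (mul_comm _ _)

lemma Function.Involutive.sum_apply_swap {M : Type*} [AddCommMonoid M] {τ : Ω → Ω}
    (hτ : Function.Involutive τ) (φ : Ω → Ω → M) : ∑ ω, φ (τ ω) ω = ∑ ω, φ ω (τ ω) := by
  simpa only [Function.Involutive.coe_toPerm, hτ _] using
    Equiv.sum_comp (hτ.toPerm τ) fun ω => φ ω (τ ω)

lemma sum_re_trace_cfc_mul_sub_le (hX : ∀ ω, (X ω).IsHermitian) {τ : Ω → Ω}
    (hτ : Function.Involutive τ) {b : ℝ}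
    (hb : ∀ ω, ‖toEuclideanCLM (𝕜 := ℂ) (X ω - X (τ ω))‖ ≤ b)
    {f g : ℝ → ℝ} (hfg : ∀ u v, (f u - f v) * (u - v) ≤ (u - v) ^ 2 * (g u + g v))
    (hg : ∀ x, 0 ≤ g x) :
    ∑ ω, ((hX ω).cfc f * (X ω - X (τ ω))).trace.re ≤ b ^ 2 * spectralSum hX g := by
  set ψ : Ω → Ω → ℝ := fun ω ω' => ((hX ω).cfc f * (X ω - X ω')).trace.re
  -- the pair `(ω, τ ω)` is exchangeable, so the sum is half the symmetrized one
  have hsymm : 2 * ∑ ω, ψ ω (τ ω) =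
      ∑ ω, (((hX ω).cfc f - (hX (τ ω)).cfc f) * (X ω - X (τ ω))).trace.re := by
    have hneg : ∀ ω, ((hX (τ ω)).cfc f * (X ω - X (τ ω))).trace.re = -ψ (τ ω) ω := fun ω => by
      rw [← neg_sub, mul_neg, trace_neg, Complex.neg_re]
    simp only [sub_mul, trace_sub, Complex.sub_re, sum_sub_distrib, hneg, sum_neg_distrib,
      hτ.sum_apply_swap ψ]
    ring
  have hsq : ∀ ω,
      (((hX ω).cfc g + (hX (τ ω)).cfc g) * ((X ω - X (τ ω)) * (X ω - X (τ ω)))).trace.re ≤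
        b ^ 2 * ∑ i, g ((hX ω).eigenvalues i) + b ^ 2 * ∑ i, g ((hX (τ ω)).eigenvalues i) := by
    intro ω
    rw [add_mul, trace_add, Complex.add_re]
    exact add_le_add
      ((hX ω).re_trace_cfc_mul_self_mul_le hg ((hX ω).sub (hX (τ ω))) (hb ω))
      ((hX (τ ω)).re_trace_cfc_mul_self_mul_le hg ((hX ω).sub (hX (τ ω))) (hb ω))
  have hreindex : ∑ ω, ∑ i, g ((hX (τ ω)).eigenvalues i) = spectralSum hX g :=
    Equiv.sum_comp (hτ.toPerm τ) fun ω => ∑ i, g ((hX ω).eigenvalues i)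
  have hmain : 2 * ∑ ω, ψ ω (τ ω) ≤ 2 * (b ^ 2 * spectralSum hX g) := calc
    2 * ∑ ω, ψ ω (τ ω)
    _ ≤ ∑ ω, (b ^ 2 * ∑ i, g ((hX ω).eigenvalues i) +
          b ^ 2 * ∑ i, g ((hX (τ ω)).eigenvalues i)) := by
        rw [hsymm]
        exact sum_le_sum fun ω _ =>
          ((hX ω).re_trace_cfc_sub_mul_sub_le (hX (τ ω)) hfg).trans (hsq ω)
    _ = 2 * (b ^ 2 * spectralSum hX g) := by
        rw [sum_add_distrib, ← mul_sum, ← mul_sum, hreindex, spectralSum]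
        ring
  linarith

/-- Exchangeable pairs: `hκ` says that `(X ω, X (τ p ω))` with `p` uniform on `s` is a matrix
Stein pair, `E[X - X' | ω] = (κ / #s) • X ω`. -/
theorem mul_spectralSum_le_of_involutions (hX : ∀ ω, (X ω).IsHermitian) {P : Type*}
    (s : Finset P) (τ : P → Ω → Ω) (hτ : ∀ p ∈ s, Function.Involutive (τ p)) {κ b : ℝ}
    (hκ : ∀ ω, ∑ p ∈ s, (X ω - X (τ p ω)) = (κ : ℂ) • X ω)
    (hb : ∀ p ∈ s, ∀ ω, ‖toEuclideanCLM (𝕜 := ℂ) (X ω - X (τ p ω))‖ ≤ b)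
    {f g : ℝ → ℝ} (hfg : ∀ u v, (f u - f v) * (u - v) ≤ (u - v) ^ 2 * (g u + g v))
    (hg : ∀ x, 0 ≤ g x) :
    κ * spectralSum hX (fun x => x * f x) ≤ #s * b ^ 2 * spectralSum hX g := by
  have hlin : ∀ ω, κ * ((hX ω).cfc f * X ω).trace.re =
      ∑ p ∈ s, ((hX ω).cfc f * (X ω - X (τ p ω))).trace.re := fun ω => by
    rw [← Complex.re_sum, ← trace_sum, ← mul_sum, hκ, mul_smul_comm, trace_smul, smul_eq_mul,
      Complex.re_ofReal_mul]
  calc κ * spectralSum hX (fun x => x * f x)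
      = ∑ p ∈ s, ∑ ω, ((hX ω).cfc f * (X ω - X (τ p ω))).trace.re := by
        simp only [spectralSum, mul_sum, ← Matrix.IsHermitian.re_trace_cfc_mul_self, hlin]
        exact sum_comm
    _ ≤ ∑ p ∈ s, b ^ 2 * spectralSum hX g :=
        sum_le_sum fun p hp => sum_re_trace_cfc_mul_sub_le hX (hτ p hp) (hb p hp) hfg hg
    _ = #s * b ^ 2 * spectralSum hX g := by rw [sum_const, nsmul_eq_mul, mul_assoc]

theorem eigenvalue_tails_of_spectralSum_exp_le [Nonempty ι] (hX : ∀ ω, (X ω).IsHermitian)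
    {c t : ℝ} (hc : 0 < c) (ht : 0 ≤ t)
    (hF : ∀ θ, (spectralSum hX fun x => exp (θ * x)) ≤
      (spectralSum hX fun x => exp (0 * x)) * exp (c * θ ^ 2 / 2)) :
    (Nat.card {ω // ⨅ i, (hX ω).eigenvalues i ≤ -t} : ℝ) / Nat.card Ω ≤
        Fintype.card ι * exp (-t ^ 2 / (2 * c)) ∧
      (Nat.card {ω // t ≤ ⨆ i, (hX ω).eigenvalues i} : ℝ) / Nat.card Ω ≤
        Fintype.card ι * exp (-t ^ 2 / (2 * c)) := by
  set θ := t / c with hθ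
  have hθ0 : 0 ≤ θ := div_nonneg ht hc.le
  have hF0 : (spectralSum hX fun x => exp (0 * x)) = Nat.card Ω * Fintype.card ι := by
    simp [spectralSum, Nat.card_eq_fintype_card]
  -- `θ = t / c` minimises `c θ² / 2 - θ t`, with minimum `-t² / (2c)`
  have hopt : exp (c * θ ^ 2 / 2) = exp (θ * t) * exp (-t ^ 2 / (2 * c)) := by
    rw [← exp_add, hθ]
    congr 1
    field_simp
    ring
  have chernoff : ∀ N : ℝ, N * exp (θ * t) ≤ (spectralSum hX fun x => exp (0 * x)) *
      exp (c * θ ^ 2 / 2) → N / Nat.card Ω ≤ Fintype.card ι * exp (-t ^ 2 / (2 * c)) := by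
    intro N hN
    rw [hopt, hF0, mul_left_comm, mul_comm (exp (θ * t))] at hN
    refine div_le_of_le_mul₀ (Nat.cast_nonneg _) (by positivity) ?_
    linarith [le_of_mul_le_mul_right hN (exp_pos _)]
  constructor
  · refine chernoff _ ?_
    calc _ ≤ spectralSum hX fun x => exp (-θ * x) :=
          natCard_mul_le_sum (fun ω => sum_nonneg fun i _ => (exp_pos _).le)
            fun ω h => exp_mul_le_sum_exp_of_iInf_le hθ0 h
      _ ≤ _ := by simpa only [neg_sq] using hF (-θ)
  · refine chernoff _ ?_
    calc _ ≤ spectralSum hX fun x => exp (θ * x) :=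
          natCard_mul_le_sum (fun ω => sum_nonneg fun i _ => (exp_pos _).le)
            fun ω h => exp_mul_le_sum_exp_of_le_iSup hθ0 h
      _ ≤ _ := hF θ

end SpectralSum

section Subsample

variable {n d m : ℕ} {A : Fin n → Matrix (Fin d) (Fin d) ℂ}

def crossPairs (n m : ℕ) : Finset (Fin n × Fin n) :=
  ({i | (i : ℕ) < m} : Finset (Fin n)) ×ˢ ({j | m ≤ (j : ℕ)} : Finset (Fin n))

lemma card_filter_val_lt_of_le (hm : m ≤ n) : #{i : Fin n | (i : ℕ) < m} = m := by
  rw [Fin.card_filter_val_lt]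
  omega

lemma card_filter_le_val (hm : m ≤ n) : #{j : Fin n | m ≤ (j : ℕ)} = n - m := by
  simp_rw [← not_lt]
  rw [filter_not, card_sdiff_of_subset (filter_subset _ _), card_filter_val_lt_of_le hm, card_univ,
    Fintype.card_fin]

lemma card_crossPairs (hm : m ≤ n) : #(crossPairs n m) = m * (n - m) := by
  rw [crossPairs, card_product, card_filter_val_lt_of_le hm, card_filter_le_val hm]

lemma mem_crossPairs {p : Fin n × Fin n} :
    p ∈ crossPairs n m ↔ (p.1 : ℕ) < m ∧ m ≤ (p.2 : ℕ) := by
  simp [crossPairs]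

lemma subsampleSum_sub_subsampleSum_mul_swap (σ : Equiv.Perm (Fin n)) {i j : Fin n}
    (hi : (i : ℕ) < m) (hj : m ≤ (j : ℕ)) :
    subsampleSum m A σ - subsampleSum m A (σ * Equiv.swap i j) = A (σ i) - A (σ j) := by
  rw [subsampleSum, subsampleSum, ← sum_sub_distrib, sum_eq_single i]
  · simp [hi]
  · intro k _ hki
    split_ifs with hk
    · rw [Equiv.Perm.mul_apply, Equiv.swap_apply_of_ne_of_ne hki (by rintro rfl; omega), sub_self]
    · exact sub_self 0
  · exact fun h => absurd (mem_univ i) h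

lemma sum_crossPairs_subsampleSum_sub (hm : m ≤ n) (hsum : ∑ i, A i = 0)
    (σ : Equiv.Perm (Fin n)) :
    ∑ p ∈ crossPairs n m, (subsampleSum m A σ - subsampleSum m A (σ * Equiv.swap p.1 p.2)) =
      n • subsampleSum m A σ := by
  set X := subsampleSum m A σ
  set low : Finset (Fin n) := {i | (i : ℕ) < m}
  set high : Finset (Fin n) := {j | m ≤ (j : ℕ)}
  have hlow : X = ∑ i ∈ low, A (σ i) := (sum_filter _ _).symm
  have hhigh : ∑ j ∈ high, A (σ j) = -X := by
    have := sum_filter_add_sum_filter_not univ (fun i : Fin n => (i : ℕ) < m) (fun i => A (σ i))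
    simp_rw [not_lt] at this
    rw [Equiv.sum_comp σ A, hsum, ← hlow] at this
    exact eq_neg_of_add_eq_zero_right this
  calc ∑ p ∈ crossPairs n m, (X - subsampleSum m A (σ * Equiv.swap p.1 p.2))
      = ∑ i ∈ low, ∑ j ∈ high, (A (σ i) - A (σ j)) := by
        rw [crossPairs, sum_product]
        refine sum_congr rfl fun i hi => sum_congr rfl fun j hj => ?_
        exact subsampleSum_sub_subsampleSum_mul_swap σ (mem_filter.1 hi).2 (mem_filter.1 hj).2
    _ = ∑ i ∈ low, ((n - m) • A (σ i) + X) := by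
        refine sum_congr rfl fun i _ => ?_
        rw [sum_sub_distrib, sum_const, card_filter_le_val hm, hhigh, sub_neg_eq_add]
    _ = (n - m) • X + m • X := by
        rw [sum_add_distrib, ← smul_sum, ← hlow, sum_const, card_filter_val_lt_of_le hm]
    _ = n • X := by rw [← add_nsmul, Nat.sub_add_cancel hm]

theorem mul_spectralSum_mul_exp_subsampleSum_le (hn : 0 < n) (hm : m ≤ n)
    (hsum : ∑ i, A i = 0) {b : ℝ}
    (hb : ∀ i j, ‖toEuclideanCLM (𝕜 := ℂ) (A i - A j)‖ ≤ b)
    (hX : ∀ σ : Equiv.Perm (Fin n), (subsampleSum m A σ).IsHermitian) (θ : ℝ) :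
    θ * (spectralSum hX fun x => x * exp (θ * x)) ≤
      m * b ^ 2 / 2 * θ ^ 2 * spectralSum hX fun x => exp (θ * x) := by
  have hstein := mul_spectralSum_le_of_involutions hX (crossPairs n m)
    (fun p σ => σ * Equiv.swap p.1 p.2)
    (fun p _ σ => by simp only [mul_assoc, Equiv.swap_mul_self, mul_one]) (κ := n)
    (fun σ => by
      rw [sum_crossPairs_subsampleSum_sub hm hsum, Complex.ofReal_natCast, Nat.cast_smul_eq_nsmul])
    (fun p hp σ => by
      rw [subsampleSum_sub_subsampleSum_mul_swap σ (mem_crossPairs.1 hp).1 (mem_crossPairs.1 hp).2]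
      exact hb _ _)
    (mul_exp_sub_mul_exp_mul_sub_le θ) (fun x => by positivity)
  have hG : (spectralSum hX fun x => x * (θ * exp (θ * x))) =
      θ * spectralSum hX fun x => x * exp (θ * x) := by
    rw [← spectralSum_const_mul]
    simp only [mul_left_comm]
  rw [hG, spectralSum_const_mul, card_crossPairs hm] at hstein
  have hF := spectralSum_nonneg hX fun x => (exp_pos (θ * x)).le
  have hmn : ((m * (n - m) : ℕ) : ℝ) ≤ m * n := by
    exact_mod_cast Nat.mul_le_mul_left m (Nat.sub_le n m)
  refine le_of_mul_le_mul_left (hstein.trans ?_) (Nat.cast_pos.2 hn)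
  have := mul_le_mul_of_nonneg_right hmn
    (mul_nonneg (sq_nonneg b) (mul_nonneg (by positivity : (0 : ℝ) ≤ θ ^ 2 / 2) hF))
  linarith

end Subsample

theorem subsampleSum_eigenvalue_tails_general {n d m : ℕ} (hm : m ≤ n) (hd : 0 < d)
    (A : Fin n → Matrix (Fin d) (Fin d) ℂ)
    (hsum : ∑ i, A i = 0) (b : ℝ)
    (hb : ∀ i j, ‖Matrix.toEuclideanCLM (𝕜 := ℂ) (A i - A j)‖ ≤ b)
    (hX : ∀ σ : Equiv.Perm (Fin n), (subsampleSum m A σ).IsHermitian) :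
    ∀ t : ℝ, 0 ≤ t →
      ((Nat.card {σ : Equiv.Perm (Fin n) // ⨅ i, (hX σ).eigenvalues i ≤ -t} : ℝ) /
            (Nat.card (Equiv.Perm (Fin n)) : ℝ) ≤
          d * Real.exp (-t ^ 2 / (m * b ^ 2)))
        ∧ ((Nat.card {σ : Equiv.Perm (Fin n) // t ≤ ⨆ i, (hX σ).eigenvalues i} : ℝ) /
            (Nat.card (Equiv.Perm (Fin n)) : ℝ) ≤
          d * Real.exp (-t ^ 2 / (m * b ^ 2))) := by
  intro t ht
  have : Nonempty (Fin d) := ⟨⟨0, hd⟩⟩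
  rcases (by positivity : (0 : ℝ) ≤ m * b ^ 2).eq_or_lt with hmb | hmb
  · -- here `-t ^ 2 / (m * b ^ 2) = -t ^ 2 / 0 = 0`, so the bound is `d ≥ 1`
    have hle : ∀ P : Equiv.Perm (Fin n) → Prop, (Nat.card {σ // P σ} : ℝ) /
        Nat.card (Equiv.Perm (Fin n)) ≤ d * exp (-t ^ 2 / (m * b ^ 2)) := fun P => by
      rw [← hmb, div_zero, exp_zero, mul_one]
      exact (div_le_one_of_le₀ (by exact_mod_cast Finite.card_subtype_le P)
        (Nat.cast_nonneg _)).trans (by exact_mod_cast hd)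
    exact ⟨hle _, hle _⟩
  · have hn : 0 < n := lt_of_lt_of_le (Nat.pos_of_ne_zero (by rintro rfl; simp at hmb)) hm
    have hmgf := le_mul_exp_sq_of_hasDerivAt (hasDerivAt_spectralSum_exp hX)
      (mul_spectralSum_mul_exp_subsampleSum_le hn hm hsum hb hX)
    have htails := eigenvalue_tails_of_spectralSum_exp_le hX (by positivity) ht hmgf
    rwa [Fintype.card_fin, show 2 * (m * b ^ 2 / 2) = (m : ℝ) * b ^ 2 by ring] at htails

/-- Concentration for sums of a random subset of Hermitian matrices.  Let
`A₁, …, A_n` be `d×d` Hermitian with `Σᵢ Aᵢ = 0` and `‖Aᵢ − A_j‖_op ≤ b`, let `π` be a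
uniformly random permutation and `X = Σ_{i=1}^m A_{π(i)}`.  Then for all `t ≥ 0`,
`P(λ_min(X) ≤ −t) ≤ d·exp(−t²/(m b²))` and `P(λ_max(X) ≥ t) ≤ d·exp(−t²/(m b²))`,
where the probability is the fraction of permutations. -/
theorem subsampleSum_eigenvalue_tails {n d m : ℕ} (hn : 2 ≤ n) (hm : m ≤ n) (hd : 0 < d)
    (hm0 : 0 < m) (A : Fin n → Matrix (Fin d) (Fin d) ℂ)
    (hherm : ∀ i, (A i).IsHermitian) (hsum : ∑ i, A i = 0) (b : ℝ)
    (hb : ∀ i j, ‖Matrix.toEuclideanCLM (𝕜 := ℂ) (A i - A j)‖ ≤ b)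
    (hX : ∀ σ : Equiv.Perm (Fin n), (subsampleSum m A σ).IsHermitian) :
    ∀ t : ℝ, 0 ≤ t →
      ((Nat.card {σ : Equiv.Perm (Fin n) // ⨅ i, (hX σ).eigenvalues i ≤ -t} : ℝ) /
            (Nat.card (Equiv.Perm (Fin n)) : ℝ) ≤
          d * Real.exp (-t ^ 2 / (m * b ^ 2)))
        ∧ ((Nat.card {σ : Equiv.Perm (Fin n) // t ≤ ⨆ i, (hX σ).eigenvalues i} : ℝ) /
            (Nat.card (Equiv.Perm (Fin n)) : ℝ) ≤
          d * Real.exp (-t ^ 2 / (m * b ^ 2))) :=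
  subsampleSum_eigenvalue_tails_general hm hd A hsum b hb hX
end
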